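/- arXiv:2502.15220 — 3 statements merged into one kernel-verified Lean document; each statement's English description precedes it below -/
import Mathlib

section
/- Let γ ≠ −1 and let a, b > 0 with a + b = 1. Define the γ-tilted probabilities a_γ = a^{γ+1}/(a^{γ+1}+b^{γ+1}) and b_γ = b^{γ+1}/(a^{γ+1}+b^{γ+1}). Then a · a_γ^{−1/(γ+1)} = b · b_γ^{−1/(γ+1)} = (a^{γ+1}+b^{γ+1})^{1/(γ+1)}. Consequently, if G : ℝ → (0,1) is differentiable at z with derivative g(z), then with a = G(z), b = 1 − G(z), and q_γ(1) = a_γ, q_γ(0) = b_γ, the conditional expected γ-score at the true model vanishes: a · a_γ^{γ/(γ+1)} · (d/dz) log q_γ(1)(z) + b · b_γ^{γ/(γ+1)} · (d/dz) log q_γ(0)(z) = 0. This is the pointwise Fisher consistency of the γ-divergence estimating equation. -/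
open Real

lemma aux1 (c a S : ℝ) (hc : c ≠ 0) (ha : 0 < a) (hS : 0 < S) :
    a * (a ^ c / S) ^ (-(1 / c)) = S ^ (1 / c) := by
  rw [Real.div_rpow (Real.rpow_nonneg ha.le c) hS.le, ← Real.rpow_mul ha.le]
  have h1 : c * -(1 / c) = -1 := by field_simp
  rw [h1, Real.rpow_neg_one, Real.rpow_neg hS.le]
  have h2 : S ^ (1 / c) ≠ 0 := (Real.rpow_pos_of_pos hS _).ne'
  field_simp


/-- Pointwise Fisher consistency of the γ-divergence estimating equation
(Equation (8) of the paper). For `γ ≠ -1` and `a, b > 0` with `a + b = 1`, the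
γ-tilted probabilities `a_γ = a^{γ+1}/(a^{γ+1}+b^{γ+1})`,
`b_γ = b^{γ+1}/(a^{γ+1}+b^{γ+1})` satisfy
`a · a_γ^{-1/(γ+1)} = b · b_γ^{-1/(γ+1)} = (a^{γ+1}+b^{γ+1})^{1/(γ+1)}`; consequently,
for a differentiable link `G` with `0 < G z < 1`, taking `a = G(z)`, `b = 1 - G(z)`,
the conditional expected γ-score at the true model vanishes. -/
theorem stmt_15
    (γ : ℝ) (hγ : γ ≠ -1)
    (a b : ℝ) (ha : 0 < a) (hb : 0 < b) (hab : a + b = 1)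
    (G g : ℝ → ℝ) (z : ℝ)
    (hderiv : ∀ w, HasDerivAt G (g w) w)
    (h01 : ∀ w, 0 < G w ∧ G w < 1) :
    (a * (a ^ (γ + 1) / (a ^ (γ + 1) + b ^ (γ + 1))) ^ (-(1 / (γ + 1)))
        = (a ^ (γ + 1) + b ^ (γ + 1)) ^ (1 / (γ + 1)) ∧
      b * (b ^ (γ + 1) / (a ^ (γ + 1) + b ^ (γ + 1))) ^ (-(1 / (γ + 1)))
        = (a ^ (γ + 1) + b ^ (γ + 1)) ^ (1 / (γ + 1))) ∧
    (G z * (G z ^ (γ + 1) / (G z ^ (γ + 1) + (1 - G z) ^ (γ + 1))) ^ (γ / (γ + 1)) *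
        deriv (fun w => Real.log (G w ^ (γ + 1) / (G w ^ (γ + 1) + (1 - G w) ^ (γ + 1)))) z
      + (1 - G z) *
          ((1 - G z) ^ (γ + 1) / (G z ^ (γ + 1) + (1 - G z) ^ (γ + 1))) ^ (γ / (γ + 1)) *
          deriv (fun w =>
            Real.log ((1 - G w) ^ (γ + 1) / (G w ^ (γ + 1) + (1 - G w) ^ (γ + 1)))) z
      = 0) := by
  have hc : γ + 1 ≠ 0 := fun h => hγ (by linarith)
  have hSab : 0 < a ^ (γ + 1) + b ^ (γ + 1) :=
    add_pos (Real.rpow_pos_of_pos ha _) (Real.rpow_pos_of_pos hb _)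
  refine ⟨⟨aux1 _ _ _ hc ha hSab, ?_⟩, ?_⟩
  · have := aux1 (γ + 1) b (a ^ (γ + 1) + b ^ (γ + 1)) hc hb hSab
    exact this
  -- Part 2
  have haz : 0 < G z := (h01 z).1
  have hbz : 0 < 1 - G z := by linarith [(h01 z).2]
  set S : ℝ → ℝ := fun w => G w ^ (γ + 1) + (1 - G w) ^ (γ + 1) with hSdef
  have hSpos : ∀ w, 0 < S w := fun w =>
    add_pos (Real.rpow_pos_of_pos (h01 w).1 _)
      (Real.rpow_pos_of_pos (by linarith [(h01 w).2]) _)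
  have hSd : HasDerivAt S
      (g z * (γ + 1) * G z ^ γ + -(g z) * (γ + 1) * (1 - G z) ^ γ) z := by
    have h1 := (hderiv z).rpow_const (p := γ + 1) (Or.inl haz.ne')
    have h2 := ((hderiv z).const_sub 1).rpow_const (p := γ + 1) (Or.inl hbz.ne')
    have := h1.add h2
    simpa [add_sub_cancel_right, Pi.add_def] using this
  set D : ℝ := g z * (γ + 1) * G z ^ γ + -(g z) * (γ + 1) * (1 - G z) ^ γ with hD
  have hd1 : deriv (fun w => Real.log (G w ^ (γ + 1) / S w)) z
      = (γ + 1) * (g z / G z) - D / S z := by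
    have heq : (fun w => Real.log (G w ^ (γ + 1) / S w))
        = fun w => (γ + 1) * Real.log (G w) - Real.log (S w) := by
      funext w
      rw [Real.log_div (Real.rpow_pos_of_pos (h01 w).1 _).ne' (hSpos w).ne',
        Real.log_rpow (h01 w).1]
    rw [heq]
    exact ((((hderiv z).log haz.ne').const_mul (γ + 1)).sub
      (hSd.log (hSpos z).ne')).deriv
  have hd2 : deriv (fun w => Real.log ((1 - G w) ^ (γ + 1) / S w)) z
      = (γ + 1) * (-(g z) / (1 - G z)) - D / S z := by
    have heq : (fun w => Real.log ((1 - G w) ^ (γ + 1) / S w))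
        = fun w => (γ + 1) * Real.log (1 - G w) - Real.log (S w) := by
      funext w
      rw [Real.log_div (Real.rpow_pos_of_pos (by linarith [(h01 w).2]) _).ne'
        (hSpos w).ne', Real.log_rpow (by linarith [(h01 w).2])]
    rw [heq]
    exact (((((hderiv z).const_sub 1).log hbz.ne').const_mul (γ + 1)).sub
      (hSd.log (hSpos z).ne')).deriv
  have tilt : ∀ x : ℝ, 0 < x →
      (x ^ (γ + 1) / S z) ^ (γ / (γ + 1)) = x ^ γ / (S z) ^ (γ / (γ + 1)) := by
    intro x hx
    rw [Real.div_rpow (Real.rpow_nonneg hx.le _) (hSpos z).le, ← Real.rpow_mul hx.le]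
    congr 2
    field_simp
  rw [show (fun w => Real.log (G w ^ (γ + 1) / (G w ^ (γ + 1) + (1 - G w) ^ (γ + 1))))
      = fun w => Real.log (G w ^ (γ + 1) / S w) from rfl,
    show (fun w => Real.log ((1 - G w) ^ (γ + 1) / (G w ^ (γ + 1) + (1 - G w) ^ (γ + 1))))
      = fun w => Real.log ((1 - G w) ^ (γ + 1) / S w) from rfl,
    hd1, hd2, show G z ^ (γ + 1) + (1 - G z) ^ (γ + 1) = S z from rfl,
    tilt _ haz, tilt _ hbz]
  have hu : G z ^ γ > 0 := Real.rpow_pos_of_pos haz _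
  have hv : (1 - G z) ^ γ > 0 := Real.rpow_pos_of_pos hbz _
  have ht : (S z) ^ (γ / (γ + 1)) > 0 := Real.rpow_pos_of_pos (hSpos z) _
  have hs : S z = G z ^ γ * G z + (1 - G z) ^ γ * (1 - G z) := by
    rw [hSdef]
    simp only
    rw [Real.rpow_add_one haz.ne' γ, Real.rpow_add_one hbz.ne' γ]
  rw [hD, hs]
  set u := G z ^ γ
  set v := (1 - G z) ^ γ
  set t := (S z) ^ (γ / (γ + 1))
  set A := G z
  set B := 1 - G z
  have hsz : u * A + v * B ≠ 0 := by positivity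
  field_simp
  ring
end

section
/- Let G be the standard Cauchy c.d.f., G(z) = 1/2 + (1/π) arctan(z), with density g(z) = 1/(π(1+z²)). Then the functions z ↦ z·g(z)/G(z) and z ↦ z·g(z)/(1−G(z)) are bounded on ℝ. Consequently, the maximum-likelihood bias function b_ML(y,z,z′) = (−y g(z)/G(z) + (1−y) g(z)/(1−G(z)))·(z − z′) is bounded in z for each fixed y ∈ {0,1} and z′ ∈ ℝ; i.e., the cauchit binary regression model has bounded ML contamination bias. -/
open Real


/-- arctan t ≥ t/(1+t²) for t ≥ 0. -/
lemma arctan_key {t : ℝ} (ht : 0 ≤ t) : t / (1 + t ^ 2) ≤ Real.arctan t := by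
  have hder : ∀ x : ℝ, HasDerivAt (fun s : ℝ => Real.arctan s - s / (1 + s ^ 2))
      (2 * x ^ 2 / (1 + x ^ 2) ^ 2) x := by
    intro x
    have hx : (1 : ℝ) + x ^ 2 ≠ 0 := by positivity
    have h2 : HasDerivAt (fun s : ℝ => s / (1 + s ^ 2))
        ((1 * (1 + x ^ 2) - x * (2 * x)) / (1 + x ^ 2) ^ 2) x := by
      have hden : HasDerivAt (fun s : ℝ => 1 + s ^ 2) (2 * x) x := by
        simpa using ((hasDerivAt_pow 2 x).const_add 1)
      exact (hasDerivAt_id x).div hden hx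
    have : HasDerivAt (fun s : ℝ => Real.arctan s - s / (1 + s ^ 2)) _ x := (Real.hasDerivAt_arctan x).sub h2
    convert this using 1
    field_simp
    ring
  have mono : MonotoneOn (fun s : ℝ => Real.arctan s - s / (1 + s ^ 2)) (Set.Ici 0) := by
    apply monotoneOn_of_deriv_nonneg (convex_Ici 0)
    · apply Continuous.continuousOn
      exact Real.continuous_arctan.sub (continuous_id.div (by continuity) (fun x => by positivity))
    · intro x hx
      exact (hder x).differentiableAt.differentiableWithinAt
    · intro x hx
      rw [(hder x).deriv]
      positivity
  have h0 : (0:ℝ) ∈ Set.Ici (0:ℝ) := Set.self_mem_Ici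
  have := mono h0 (Set.mem_Ici.mpr ht) ht
  simp only [Real.arctan_zero] at this
  norm_num at this
  linarith

lemma Dpos (z : ℝ) : 0 < 1 / 2 + 1 / Real.pi * Real.arctan z := by
  have hπ := Real.pi_pos
  have h1 : -(Real.pi / 2) < Real.arctan z := Real.neg_pi_div_two_lt_arctan z
  have h2 : 1 / Real.pi * (-(Real.pi / 2)) < 1 / Real.pi * Real.arctan z :=
    mul_lt_mul_of_pos_left h1 (by positivity)
  have h3 : 1 / Real.pi * (-(Real.pi / 2)) = -(1/2) := by field_simp
  linarith

/-- lower bound for the left tail: for z < 0, D(z) ≥ (-z)/(π(1+z²)). -/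
lemma Dlb {z : ℝ} (hz : z < 0) :
    (-z) / (Real.pi * (1 + z ^ 2)) ≤ 1 / 2 + 1 / Real.pi * Real.arctan z := by
  have hπ := Real.pi_pos
  set s : ℝ := -z with hs
  have hspos : 0 < s := by simp [hs]; linarith
  have hat : Real.arctan z = -Real.arctan s := by
    rw [show z = -s by simp [hs]]; exact Real.arctan_neg s
  have hinv : Real.arctan s⁻¹ = Real.pi / 2 - Real.arctan s := Real.arctan_inv_of_pos hspos
  have hkey : s⁻¹ / (1 + s⁻¹ ^ 2) ≤ Real.arctan s⁻¹ := arctan_key (by positivity)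
  have heq2 : s⁻¹ / (1 + s⁻¹ ^ 2) = s / (1 + s ^ 2) := by
    field_simp
    ring
  have hz2 : z ^ 2 = s ^ 2 := by simp [hs]
  have hD : 1 / 2 + 1 / Real.pi * Real.arctan z = Real.arctan s⁻¹ / Real.pi := by
    rw [hat, hinv]; field_simp; ring
  rw [hD, hz2]
  rw [heq2] at hkey
  rw [div_le_div_iff₀ (by positivity) hπ]
  have h1s : 0 < 1 + s ^ 2 := by positivity
  calc s * Real.pi = (s / (1 + s^2)) * Real.pi * (1 + s^2) := by field_simp
    _ ≤ Real.arctan s⁻¹ * Real.pi * (1 + s^2) := by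
        apply mul_le_mul_of_nonneg_right (mul_le_mul_of_nonneg_right hkey (le_of_lt hπ)) (le_of_lt h1s)
    _ = Real.arctan s⁻¹ * (Real.pi * (1 + s^2)) := by ring

lemma lemB (z : ℝ) :
    |z * (1 / (Real.pi * (1 + z ^ 2))) / (1 / 2 + 1 / Real.pi * Real.arctan z)| ≤ 2 := by
  have hπ := Real.pi_pos
  have hπ3 := Real.pi_gt_three
  have hD := Dpos z
  have hX : 0 < Real.pi * (1 + z ^ 2) := by positivity
  rcases le_or_gt 0 z with hz | hz
  · have hnum : 0 ≤ z * (1 / (Real.pi * (1 + z ^ 2))) := by positivity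
    rw [abs_of_nonneg (div_nonneg hnum hD.le), div_le_iff₀ hD]
    have har : 0 ≤ Real.arctan z := by
      have := Real.arctan_strictMono.monotone hz
      simpa using this
    have h1 : z * (1 / (Real.pi * (1 + z ^ 2))) = z / (Real.pi * (1 + z ^ 2)) := by ring
    have h2 : z / (Real.pi * (1 + z ^ 2)) ≤ 1 := by
      rw [div_le_one hX]; nlinarith [sq_nonneg (z - 1), sq_nonneg z]
    have h3 : 0 ≤ 1 / Real.pi * Real.arctan z := by positivity
    nlinarith
  · have hlb := Dlb hz
    have hnum : z * (1 / (Real.pi * (1 + z ^ 2))) = -((-z) / (Real.pi * (1 + z ^ 2))) := by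
      ring
    rw [hnum, neg_div, abs_neg,
      abs_of_nonneg (div_nonneg (div_nonneg (by linarith) hX.le) hD.le), div_le_iff₀ hD]
    nlinarith [div_nonneg (le_of_lt (show (0:ℝ) < -z by linarith)) hX.le]

lemma lemC (z : ℝ) :
    |(1 / (Real.pi * (1 + z ^ 2))) / (1 / 2 + 1 / Real.pi * Real.arctan z)| ≤ 2 := by
  have hπ := Real.pi_pos
  have hπ3 := Real.pi_gt_three
  have hD := Dpos z
  have hX : 0 < Real.pi * (1 + z ^ 2) := by positivity
  rw [abs_of_nonneg (div_nonneg (by positivity) hD.le), div_le_iff₀ hD]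
  rcases le_or_gt (-1) z with hz | hz
  · have har : Real.arctan (-1) ≤ Real.arctan z := Real.arctan_strictMono.monotone hz
    rw [show Real.arctan (-1) = -(Real.pi/4) by rw [Real.arctan_neg, Real.arctan_one]] at har
    have h1 : 1 / (Real.pi * (1 + z ^ 2)) ≤ 1 / Real.pi := by
      apply div_le_div_of_nonneg_left one_pos.le hπ; nlinarith [sq_nonneg z]
    have h2 : 1 / Real.pi * (-(Real.pi/4)) = -(1/4 : ℝ) := by field_simp
    have h3 : -(1/4 : ℝ) ≤ 1 / Real.pi * Real.arctan z := by
      rw [← h2]; exact mul_le_mul_of_nonneg_left har (by positivity)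
    have h4 : 1 / Real.pi ≤ 1 / 3 := by
      apply div_le_div_of_nonneg_left one_pos.le (by norm_num); linarith
    linarith
  · have hlb := Dlb (by linarith : z < 0)
    have hs1 : 1 ≤ -z := by linarith
    have hinvX : 0 < 1 / (Real.pi * (1 + z ^ 2)) := by positivity
    have key : (-z) / (Real.pi * (1 + z ^ 2)) = (-z) * (1 / (Real.pi * (1 + z ^ 2))) := by ring
    rw [key] at hlb
    nlinarith

/-- For the cauchit link, i.e. the standard Cauchy c.d.f.
`G(z) = 1/2 + (1/π) arctan z` with density `g(z) = 1/(π(1+z²))`, the functions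
`z ↦ z g(z)/G(z)` and `z ↦ z g(z)/(1-G(z))` are bounded on `ℝ`; consequently the
maximum-likelihood contamination bias
`b_ML(y,z,z') = (-y g(z)/G(z) + (1-y) g(z)/(1-G(z)))·(z - z')` is bounded in `z`
for each fixed `y ∈ {0,1}` and `z' ∈ ℝ`. -/
theorem stmt_16
    (G g : ℝ → ℝ)
    (hG : ∀ z, G z = 1 / 2 + (1 / Real.pi) * Real.arctan z)
    (hg : ∀ z, g z = 1 / (Real.pi * (1 + z ^ 2))) :
    (∃ M : ℝ, ∀ z : ℝ, |z * g z / G z| ≤ M) ∧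
    (∃ M : ℝ, ∀ z : ℝ, |z * g z / (1 - G z)| ≤ M) ∧
    (∀ y z' : ℝ, (y = 0 ∨ y = 1) →
      ∃ M : ℝ, ∀ z : ℝ,
        |(-(y * g z / G z) + (1 - y) * g z / (1 - G z)) * (z - z')| ≤ M) := by
  -- basic bounds
  have hB1 : ∀ z : ℝ, |z * g z / G z| ≤ 2 := by
    intro z
    have h : z * g z / G z = z * (1 / (Real.pi * (1 + z ^ 2))) / (1 / 2 + 1 / Real.pi * Real.arctan z) := by
      rw [hg, hG]
    rw [h]; exact lemB z
  have hB2 : ∀ z : ℝ, |z * g z / (1 - G z)| ≤ 2 := by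
    intro z
    have hden : 1 - G z = 1 / 2 + 1 / Real.pi * Real.arctan (-z) := by
      rw [hG, Real.arctan_neg]; ring
    have hnum : z * g z = -((-z) * (1 / (Real.pi * (1 + (-z) ^ 2)))) := by
      rw [hg]; ring_nf
    rw [hden, hnum, neg_div, abs_neg]
    exact lemB (-z)
  have hC1 : ∀ z : ℝ, |g z / G z| ≤ 2 := by
    intro z
    have h : g z / G z = (1 / (Real.pi * (1 + z ^ 2))) / (1 / 2 + 1 / Real.pi * Real.arctan z) := by
      rw [hg, hG]
    rw [h]; exact lemC z
  have hC2 : ∀ z : ℝ, |g z / (1 - G z)| ≤ 2 := by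
    intro z
    have hden : 1 - G z = 1 / 2 + 1 / Real.pi * Real.arctan (-z) := by
      rw [hG, Real.arctan_neg]; ring
    have hnum : g z = 1 / (Real.pi * (1 + (-z) ^ 2)) := by rw [hg]; ring_nf
    rw [hden, hnum]
    exact lemC (-z)
  refine ⟨⟨2, hB1⟩, ⟨2, hB2⟩, ?_⟩
  intro y z' hy
  rcases hy with h | h
  · subst h
    refine ⟨2 + 2 * |z'|, fun z => ?_⟩
    have heq : (-(0 * g z / G z) + (1 - 0) * g z / (1 - G z)) * (z - z')
        = z * g z / (1 - G z) - z' * (g z / (1 - G z)) := by ring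
    rw [heq]
    calc |z * g z / (1 - G z) - z' * (g z / (1 - G z))|
        ≤ |z * g z / (1 - G z)| + |z' * (g z / (1 - G z))| := abs_sub _ _
      _ ≤ 2 + 2 * |z'| := by
          rw [abs_mul]
          have := hC2 z
          have h2 := hB2 z
          nlinarith [abs_nonneg z', abs_nonneg (g z / (1 - G z))]
  · subst h
    refine ⟨2 + 2 * |z'|, fun z => ?_⟩
    have heq : (-(1 * g z / G z) + (1 - 1) * g z / (1 - G z)) * (z - z')
        = -(z * g z / G z - z' * (g z / G z)) := by ring
    rw [heq, abs_neg]
    calc |z * g z / G z - z' * (g z / G z)|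
        ≤ |z * g z / G z| + |z' * (g z / G z)| := abs_sub _ _
      _ ≤ 2 + 2 * |z'| := by
          rw [abs_mul]
          have := hC1 z
          have h2 := hB1 z
          nlinarith [abs_nonneg z', abs_nonneg (g z / G z)]
end

section
/- Let q₀, q₁ > 0 with q₀ + q₁ = 1, let y ∈ {0,1}, and write q(y) = q₁ if y = 1 and q₀ if y = 0. Define, for γ > 0, Ψ_γ(y) = −(1/γ)(q(y)^{γ+1}/(q₀^{γ+1}+q₁^{γ+1}))^{γ/(γ+1)}. Then lim_{γ→0⁺} (Ψ_γ(y) + 1/γ) = −log q(y). In this sense, the γ-divergence loss reduces to the negative log-likelihood loss (up to the additive constant 1/γ) as γ → 0. -/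
open Real Filter

/-- The γ-divergence loss reduces to the negative log-likelihood as `γ → 0⁺`:
for class probabilities `q₀, q₁ > 0` with `q₀ + q₁ = 1` and `y ∈ {0,1}`,
`Ψ_γ(y) + 1/γ = -(1/γ)(q(y)^{γ+1}/(q₀^{γ+1}+q₁^{γ+1}))^{γ/(γ+1)} + 1/γ
  → -log q(y)` as `γ → 0⁺`. -/
theorem stmt_18
    (q₀ q₁ : ℝ) (h0 : 0 < q₀) (h1 : 0 < q₁) (hsum : q₀ + q₁ = 1)
    (y : ℝ) (hy : y = 0 ∨ y = 1)
    (q : ℝ → ℝ) (hq : ∀ u : ℝ, q u = if u = 1 then q₁ else q₀) :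
    Tendsto (fun γ : ℝ =>
        -(1 / γ) * ((q y) ^ (γ + 1) / (q₀ ^ (γ + 1) + q₁ ^ (γ + 1))) ^ (γ / (γ + 1)) + 1 / γ)
      (nhdsWithin 0 (Set.Ioi 0)) (nhds (-Real.log (q y))) := by
  have hqy : 0 < q y := by
    rw [hq]; split <;> assumption
  set c : ℝ := Real.log (q y) with hc
  -- the function F
  set F : ℝ → ℝ := fun γ =>
      Real.exp (γ * c - (γ / (γ + 1)) * Real.log (q₀ ^ (γ + 1) + q₁ ^ (γ + 1))) with hF
  have hF0 : F 0 = 1 := by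
    simp [hF, Real.rpow_one, hsum]
  -- derivative of F at 0 is c
  have hd : HasDerivAt F c 0 := by
    have hu : HasDerivAt (fun γ : ℝ => γ / (γ + 1)) 1 0 := by
      have := (hasDerivAt_id (0 : ℝ)).div ((hasDerivAt_id (0 : ℝ)).add_const 1)
        (by norm_num)
      refine this.congr_deriv ?_
      simp
    have hS0 : HasDerivAt (fun γ : ℝ => q₀ ^ (γ + 1)) (q₀ ^ ((0:ℝ) + 1) * Real.log q₀ * 1) 0 := by
      have h := (hasStrictDerivAt_const_rpow h0 ((0:ℝ) + 1)).hasDerivAt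
      exact h.comp 0 ((hasDerivAt_id (0 : ℝ)).add_const 1)
    have hS1 : HasDerivAt (fun γ : ℝ => q₁ ^ (γ + 1)) (q₁ ^ ((0:ℝ) + 1) * Real.log q₁ * 1) 0 := by
      have h := (hasStrictDerivAt_const_rpow h1 ((0:ℝ) + 1)).hasDerivAt
      exact h.comp 0 ((hasDerivAt_id (0 : ℝ)).add_const 1)
    have hS : HasDerivAt (fun γ : ℝ => q₀ ^ (γ + 1) + q₁ ^ (γ + 1))
        (q₀ ^ ((0:ℝ) + 1) * Real.log q₀ * 1 + q₁ ^ ((0:ℝ) + 1) * Real.log q₁ * 1) 0 :=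
      hS0.add hS1
    have hSne : q₀ ^ ((0:ℝ) + 1) + q₁ ^ ((0:ℝ) + 1) ≠ 0 := by
      simp [Real.rpow_one, hsum]
    have hv : HasDerivAt (fun γ : ℝ => Real.log (q₀ ^ (γ + 1) + q₁ ^ (γ + 1)))
        ((q₀ ^ ((0:ℝ) + 1) * Real.log q₀ * 1 + q₁ ^ ((0:ℝ) + 1) * Real.log q₁ * 1) /
          (q₀ ^ ((0:ℝ) + 1) + q₁ ^ ((0:ℝ) + 1))) 0 := hS.log hSne
    have huv := hu.mul hv
    have hlin : HasDerivAt (fun γ : ℝ => γ * c) c 0 := by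
      simpa using (hasDerivAt_id (0 : ℝ)).mul_const c
    have hg : HasDerivAt (fun γ : ℝ =>
        γ * c - (γ / (γ + 1)) * Real.log (q₀ ^ (γ + 1) + q₁ ^ (γ + 1))) c 0 := by
      have := hlin.sub huv
      refine this.congr_deriv ?_
      simp [Real.rpow_one, hsum]
    have := hg.exp
    simpa [Real.rpow_one, hsum] using this
  -- slope tendsto
  have hslope : Tendsto (fun γ : ℝ => -((F γ - F 0) / (γ - 0)))
      (nhdsWithin 0 (Set.Ioi 0)) (nhds (-c)) := by
    have h := hasDerivAt_iff_tendsto_slope.mp hd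
    have h2 : Tendsto (slope F 0) (nhdsWithin 0 (Set.Ioi 0)) (nhds c) :=
      h.mono_left (nhdsWithin_mono 0 (fun x hx => ne_of_gt hx))
    have := h2.neg
    refine this.congr (fun γ => ?_)
    simp [slope_def_field, div_eq_inv_mul]
  refine hslope.congr' ?_
  filter_upwards [self_mem_nhdsWithin] with γ (hγ : γ ∈ Set.Ioi (0:ℝ))
  have hγ0 : (0:ℝ) < γ := hγ
  have hγ1 : (0:ℝ) < γ + 1 := by linarith
  have hqpow : (0:ℝ) < (q y) ^ (γ + 1) := Real.rpow_pos_of_pos hqy _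
  have hSpos : (0:ℝ) < q₀ ^ (γ + 1) + q₁ ^ (γ + 1) :=
    add_pos (Real.rpow_pos_of_pos h0 _) (Real.rpow_pos_of_pos h1 _)
  have hA : (0:ℝ) < (q y) ^ (γ + 1) / (q₀ ^ (γ + 1) + q₁ ^ (γ + 1)) := div_pos hqpow hSpos
  have key : ((q y) ^ (γ + 1) / (q₀ ^ (γ + 1) + q₁ ^ (γ + 1))) ^ (γ / (γ + 1)) = F γ := by
    rw [Real.rpow_def_of_pos hA, hF]
    congr 1
    rw [Real.log_div (ne_of_gt hqpow) (ne_of_gt hSpos), Real.log_rpow hqy]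
    field_simp
    ring
  rw [key, hF0]
  rw [sub_zero]
  ring
end
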